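/- arXiv:2106.08811 — 5 statements merged into one kernel-verified Lean document; each statement's English description precedes it below -/
import Mathlib

section
/- Let f : ℝ^D → ℝ be almost everywhere positive and integrable with ∫ |v|² f(v) dv < ∞, number density n > 0 and temperature T > 0 (computed with particle mass m > 0), and let M = M[f] be the Maxwellian with the same number density, mean velocity and temperature as f. Assume f·log f, f·log M, M·log f and M·log M are integrable. Then the BGK entropy dissipation is nonpositive: ∫_{ℝ^D} (M(v) − f(v)) · log f(v) dv ≤ 0 (the H-theorem for the BGK operator). -/
/-!
Write `log f = (log f - log M) + log M`. The first part contributes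
`∫ (M - f) (log f - log M) ≤ 0`, pointwise by monotonicity of `log`. The second part vanishes:
`log M` is an affine function of `‖v - vb‖²`, so `∫ f log M` and `∫ M log M` depend only on the
mass and the energy about `vb`, which `f` and `M` share. The energy of `M` comes from the Gaussian
moment `∫ ‖x‖² exp (-b ‖x‖²) = D / (2b) ∫ exp (-b ‖x‖²)`, which in polar coordinates reduces to
`Γ (s + 1) = s Γ (s)`.
-/

open MeasureTheory

/-- The Maxwellian distribution with number density `n`, mean velocity `vb`,
temperature `T` and particle mass `m` on `ℝ^D`. -/
noncomputable def maxwellian (D : ℕ) (m n T : ℝ) (vb : EuclideanSpace ℝ (Fin D))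
    (v : EuclideanSpace ℝ (Fin D)) : ℝ :=
  n * (m / (2 * Real.pi * T)) ^ ((D : ℝ) / 2) * Real.exp (-(m * ‖v - vb‖ ^ 2) / (2 * T))

open Real Set

theorem integral_Ioi_rpow_mul_exp_neg_mul_sq {b q : ℝ} (hb : 0 < b) (hq : -1 < q) :
    ∫ y in Ioi (0 : ℝ), y ^ q * exp (-b * y ^ 2) =
      b ^ (-(q + 1) / 2) * (1 / 2) * Gamma ((q + 1) / 2) := by
  rw [← integral_rpow_mul_exp_neg_mul_rpow two_pos hq hb]
  refine setIntegral_congr_fun measurableSet_Ioi fun y _ => ?_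
  norm_cast

theorem integral_Ioi_pow_mul_sq_mul_exp_neg_mul_sq {b : ℝ} (hb : 0 < b) (k : ℕ) :
    ∫ y in Ioi (0 : ℝ), y ^ k * (y ^ 2 * exp (-b * y ^ 2)) =
      (k + 1) / (2 * b) * ∫ y in Ioi (0 : ℝ), y ^ k * exp (-b * y ^ 2) := by
  have hk : (-1 : ℝ) < k := by linarith [k.cast_nonneg (α := ℝ)]
  have hk2 : (-1 : ℝ) < k + 2 := by linarith
  calc ∫ y in Ioi (0 : ℝ), y ^ k * (y ^ 2 * exp (-b * y ^ 2))
      = ∫ y in Ioi (0 : ℝ), y ^ ((k : ℝ) + 2) * exp (-b * y ^ 2) := by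
        refine setIntegral_congr_fun measurableSet_Ioi fun y _ => ?_
        rw [← mul_assoc, ← pow_add, ← Real.rpow_natCast]
        push_cast; rfl
    _ = (k + 1) / (2 * b) * ∫ y in Ioi (0 : ℝ), y ^ (k : ℝ) * exp (-b * y ^ 2) := by
        rw [integral_Ioi_rpow_mul_exp_neg_mul_sq hb hk, integral_Ioi_rpow_mul_exp_neg_mul_sq hb hk2,
          show ((k : ℝ) + 2 + 1) / 2 = (k + 1) / 2 + 1 by ring,
          Gamma_add_one (by positivity),
          show -((k : ℝ) + 2 + 1) / 2 = -(k + 1) / 2 + (-1) by ring, rpow_add hb, rpow_neg_one]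
        field_simp
    _ = _ := by simp_rw [Real.rpow_natCast]

theorem integral_sq_norm_mul_exp_neg_mul_sq_norm {E : Type*} [NormedAddCommGroup E]
    [NormedSpace ℝ E] [FiniteDimensional ℝ E] [MeasurableSpace E] [BorelSpace E]
    (μ : Measure E) [μ.IsAddHaarMeasure] {b : ℝ} (hb : 0 < b) :
    ∫ x, ‖x‖ ^ 2 * exp (-b * ‖x‖ ^ 2) ∂μ =
      Module.finrank ℝ E / (2 * b) * ∫ x, exp (-b * ‖x‖ ^ 2) ∂μ := by
  rcases subsingleton_or_nontrivial E with hE | hE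
  · simp [Subsingleton.elim _ (0 : E), Module.finrank_zero_of_subsingleton]
  have hdim : Module.finrank ℝ E - 1 + 1 = Module.finrank ℝ E :=
    Nat.sub_add_cancel Module.finrank_pos
  rw [integral_fun_norm_addHaar μ (fun r => r ^ 2 * exp (-b * r ^ 2)),
    integral_fun_norm_addHaar μ (fun r => exp (-b * r ^ 2))]
  simp only [smul_eq_mul, nsmul_eq_mul]
  rw [integral_Ioi_pow_mul_sq_mul_exp_neg_mul_sq hb, ← hdim]
  push_cast
  ring

theorem sub_mul_log_sub_log_nonpos {a b : ℝ} (ha : 0 < a) (hb : 0 < b) :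
    (b - a) * (log a - log b) ≤ 0 := by
  rcases le_total a b with hab | hab
  · exact mul_nonpos_of_nonneg_of_nonpos (sub_nonneg.2 hab) (sub_nonpos.2 (log_le_log ha hab))
  · exact mul_nonpos_of_nonpos_of_nonneg (sub_nonpos.2 hab) (sub_nonneg.2 (log_le_log hb hab))

theorem integral_sub_mul_log_nonpos_of_integral_mul_log_eq {α : Type*} [MeasurableSpace α]
    {μ : Measure α} {f g : α → ℝ} (hf : ∀ᵐ x ∂μ, 0 < f x) (hg : ∀ᵐ x ∂μ, 0 < g x)
    (hflogf : Integrable (fun x => f x * log (f x)) μ)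
    (hflogg : Integrable (fun x => f x * log (g x)) μ)
    (hglogf : Integrable (fun x => g x * log (f x)) μ)
    (hglogg : Integrable (fun x => g x * log (g x)) μ)
    (h : ∫ x, f x * log (g x) ∂μ = ∫ x, g x * log (g x) ∂μ) :
    ∫ x, (g x - f x) * log (f x) ∂μ ≤ 0 := by
  have hgap : ∫ x, (g x - f x) * (log (f x) - log (g x)) ∂μ ≤ 0 :=
    integral_nonpos_of_ae <| by
      filter_upwards [hf, hg] with x hfx hgx using sub_mul_log_sub_log_nonpos hfx hgx
  have hsplit : ∫ x, (g x - f x) * (log (f x) - log (g x)) ∂μ =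
      ∫ x, (g x - f x) * log (f x) ∂μ -
        (∫ x, g x * log (g x) ∂μ - ∫ x, f x * log (g x) ∂μ) := by
    simp only [mul_sub, sub_mul]
    rw [integral_sub (hglogf.sub' hflogf) (hglogg.sub' hflogg), integral_sub hglogg hflogg]
  linarith

section Maxwellian

variable {D : ℕ} {m n T : ℝ} {vb : EuclideanSpace ℝ (Fin D)}

theorem maxwellian_eq (v : EuclideanSpace ℝ (Fin D)) :
    maxwellian D m n T vb v =
      n * (m / (2 * π * T)) ^ ((D : ℝ) / 2) * exp (-(m / (2 * T)) * ‖v - vb‖ ^ 2) := by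
  rw [maxwellian]; congr 2; ring

theorem maxwellian_pos (hm : 0 < m) (hT : 0 < T) (hn : 0 < n)
    (v : EuclideanSpace ℝ (Fin D)) : 0 < maxwellian D m n T vb v := by
  rw [maxwellian]; positivity

theorem log_maxwellian (hm : 0 < m) (hT : 0 < T) (hn : n ≠ 0)
    (v : EuclideanSpace ℝ (Fin D)) :
    log (maxwellian D m n T vb v) =
      log (n * (m / (2 * π * T)) ^ ((D : ℝ) / 2)) - m / (2 * T) * ‖v - vb‖ ^ 2 := by
  rw [maxwellian_eq, log_mul (by positivity) (exp_pos _).ne', log_exp]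
  ring

theorem maxwellian_prefactor_mul (hm : 0 < m) (hT : 0 < T) :
    n * (m / (2 * π * T)) ^ ((D : ℝ) / 2) * (π / (m / (2 * T))) ^ ((D : ℝ) / 2) = n := by
  rw [mul_assoc, ← mul_rpow (by positivity) (by positivity),
    show m / (2 * π * T) * (π / (m / (2 * T))) = 1 by field_simp, one_rpow, mul_one]

theorem integral_maxwellian (hm : 0 < m) (hT : 0 < T) :
    ∫ v, maxwellian D m n T vb v = n := by
  simp_rw [maxwellian_eq]
  rw [integral_const_mul, integral_sub_right_eq_self (fun v => exp (-(m / (2 * T)) * ‖v‖ ^ 2)),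
    GaussianFourier.integral_rexp_neg_mul_sq_norm (by positivity), finrank_euclideanSpace_fin,
    maxwellian_prefactor_mul hm hT]

theorem integrable_maxwellian (hm : 0 < m) (hT : 0 < T) (hn : n ≠ 0) :
    Integrable (maxwellian D m n T vb) :=
  Integrable.of_integral_ne_zero (by rw [integral_maxwellian hm hT]; exact hn)

theorem integral_kinetic_energy_mul_maxwellian (hm : 0 < m) (hT : 0 < T) :
    ∫ v, m / 2 * ‖v - vb‖ ^ 2 * maxwellian D m n T vb v = D / 2 * n * T := by
  have hB : 0 < m / (2 * T) := by positivity
  simp_rw [maxwellian_eq]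
  calc ∫ v, m / 2 * ‖v - vb‖ ^ 2 *
        (n * (m / (2 * π * T)) ^ ((D : ℝ) / 2) * exp (-(m / (2 * T)) * ‖v - vb‖ ^ 2))
      = m / 2 * (n * (m / (2 * π * T)) ^ ((D : ℝ) / 2)) *
          ∫ v : EuclideanSpace ℝ (Fin D), ‖v‖ ^ 2 * exp (-(m / (2 * T)) * ‖v‖ ^ 2) := by
        rw [← integral_sub_right_eq_self (fun v => ‖v‖ ^ 2 * exp (-(m / (2 * T)) * ‖v‖ ^ 2)) vb,
          ← integral_const_mul]
        congr 1 with v; ring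
    _ = D / 2 * n * T := by
        rw [integral_sq_norm_mul_exp_neg_mul_sq_norm _ hB,
          GaussianFourier.integral_rexp_neg_mul_sq_norm hB, finrank_euclideanSpace_fin]
        calc _ = m / 2 * D / (2 * (m / (2 * T))) * (n * (m / (2 * π * T)) ^ ((D : ℝ) / 2) *
              (π / (m / (2 * T))) ^ ((D : ℝ) / 2)) := by ring
          _ = D / 2 * n * T := by rw [maxwellian_prefactor_mul hm hT]; field_simp

theorem integral_mul_log_maxwellian_of_moments (hm : 0 < m) (hT : 0 < T) (hn : n ≠ 0)
    {g : EuclideanSpace ℝ (Fin D) → ℝ} (hg : Integrable g)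
    (hglogM : Integrable (fun v => g v * log (maxwellian D m n T vb v)))
    (hmass : n = ∫ v, g v) (henergy : (D : ℝ) / 2 * n * T = ∫ v, m / 2 * ‖v - vb‖ ^ 2 * g v) :
    ∫ v, g v * log (maxwellian D m n T vb v) =
      n * (log (n * (m / (2 * π * T)) ^ ((D : ℝ) / 2)) - D / 2) := by
  set c := log (n * (m / (2 * π * T)) ^ ((D : ℝ) / 2)) with hc
  have hpt : ∀ v, m / 2 * ‖v - vb‖ ^ 2 * g v =
      T * (c * g v - g v * log (maxwellian D m n T vb v)) := by
    intro v
    rw [log_maxwellian hm hT hn, ← hc]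
    field_simp
    ring
  simp_rw [hpt] at henergy
  rw [integral_const_mul, integral_sub (hg.const_mul c) hglogM, integral_const_mul, ← hmass]
    at henergy
  have hT0 : T ≠ 0 := hT.ne'
  field_simp at henergy
  linarith

end Maxwellian

theorem bgk_entropy_dissipation_nonpos_general
    (D : ℕ) (m : ℝ) (hm : 0 < m)
    (f : EuclideanSpace ℝ (Fin D) → ℝ)
    (hf_pos : ∀ᵐ v, 0 < f v)
    (hf_int : Integrable f)
    (n : ℝ) (hn_def : n = ∫ v, f v) (hn : 0 < n)
    (vb : EuclideanSpace ℝ (Fin D))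
    (T : ℝ) (hT : 0 < T)
    (hT_def : (D : ℝ) / 2 * n * T = ∫ v, m / 2 * ‖v - vb‖ ^ 2 * f v)
    (hflogf : Integrable (fun v => f v * Real.log (f v)))
    (hflogM : Integrable (fun v => f v * Real.log (maxwellian D m n T vb v)))
    (hMlogf : Integrable (fun v => maxwellian D m n T vb v * Real.log (f v)))
    (hMlogM : Integrable (fun v =>
      maxwellian D m n T vb v * Real.log (maxwellian D m n T vb v))) :
    (∫ v, (maxwellian D m n T vb v - f v) * Real.log (f v)) ≤ 0 := by
  refine integral_sub_mul_log_nonpos_of_integral_mul_log_eq hf_pos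
    (ae_of_all _ (maxwellian_pos hm hT hn)) hflogf hflogM hMlogf hMlogM ?_
  rw [integral_mul_log_maxwellian_of_moments hm hT hn.ne' hf_int hflogM hn_def hT_def,
    integral_mul_log_maxwellian_of_moments hm hT hn.ne' (integrable_maxwellian hm hT hn.ne')
      hMlogM (integral_maxwellian hm hT).symm (integral_kinetic_energy_mul_maxwellian hm hT).symm]

/-- H-theorem for the BGK operator: the entropy dissipation
`∫ (M[f] − f) log f` is nonpositive, where `M[f]` is the Maxwellian with the
same number density, mean velocity and temperature as `f`. -/
theorem bgk_entropy_dissipation_nonpos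
    (D : ℕ) (hD : 1 ≤ D) (m : ℝ) (hm : 0 < m)
    (f : EuclideanSpace ℝ (Fin D) → ℝ)
    (hf_pos : ∀ᵐ v, 0 < f v)
    (hf_int : Integrable f)
    (hf_mom : Integrable (fun v => f v • v))
    (hf_en : Integrable (fun v => ‖v‖ ^ 2 * f v))
    (n : ℝ) (hn_def : n = ∫ v, f v) (hn : 0 < n)
    (vb : EuclideanSpace ℝ (Fin D)) (hvb : n • vb = ∫ v, f v • v)
    (T : ℝ) (hT : 0 < T)
    (hT_def : (D : ℝ) / 2 * n * T = ∫ v, m / 2 * ‖v - vb‖ ^ 2 * f v)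
    (hflogf : Integrable (fun v => f v * Real.log (f v)))
    (hflogM : Integrable (fun v => f v * Real.log (maxwellian D m n T vb v)))
    (hMlogf : Integrable (fun v => maxwellian D m n T vb v * Real.log (f v)))
    (hMlogM : Integrable (fun v =>
      maxwellian D m n T vb v * Real.log (maxwellian D m n T vb v))) :
    (∫ v, (maxwellian D m n T vb v - f v) * Real.log (f v)) ≤ 0 :=
  bgk_entropy_dissipation_nonpos_general D m hm f hf_pos hf_int n hn_def hn vb T hT hT_def hflogf
    hflogM hMlogf hMlogM
end

section
/- Let f_p, f_q : ℝ^D → ℝ be nonnegative and integrable with finite second moments, number densities n_p, n_q > 0, mean velocities v̄_p, v̄_q and temperatures T_p, T_q (computed with particle masses m_p, m_q > 0), and set ρ_p = m_p n_p, ρ_q = m_q n_q. Let ν_{p,q}, ν_{q,p} > 0, let u = (ρ_p ν_{p,q} v̄_p + ρ_q ν_{q,p} v̄_q)/(ρ_p ν_{p,q} + ρ_q ν_{q,p}), and for Θ > 0 let M_{p,q} be the Maxwellian with mass m_p, density n_p, mean u and temperature Θ, and M_{q,p} the Maxwellian with mass m_q, density n_q, mean u and temperature Θ. Then the kinetic-energy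 exchange balance m_p ∫ |v|² ν_{p,q}(M_{p,q}(v) − f_p(v)) dv + m_q ∫ |v|² ν_{q,p}(M_{q,p}(v) − f_q(v)) dv = 0 holds if and only if Θ = (n_p ν_{p,q} T_p + n_q ν_{q,p} T_q)/(n_p ν_{p,q} + n_q ν_{q,p}) + (ρ_p ν_{p,q}(|v̄_p|² − |u|²) + ρ_q ν_{q,p}(|v̄_q|² − |u|²)) / (D (n_p ν_{p,q} + n_q ν_{q,p})). -/
/-!
The balance involves `f_p`, `f_q` only through their second velocity moments. Splitting
`|v|² = |v - v̄|² + 2 v̄ · v - |v̄|²`, a density with number density `n`, mean velocity `v̄` and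
temperature `T` has `∫ |v|² f = D n T / m + n |v̄|²`. The Maxwellian has the same second moment
with `(v̄, T) = (u, Θ)`: after the shift `v = w + u` and symmetrisation in `w`, the parallelogram
law leaves the Gaussian integrals `∫ e^{-b|w|²} = (π/b)^{D/2}` and
`∫ |w|² e^{-b|w|²} = D/(2b) · (π/b)^{D/2}`, the second of which reduces in polar coordinates to
`Γ(s + 1) = s Γ(s)`. Each species thus contributes `ν (D n (Θ - T) + ρ (|u|² - |v̄|²))`, and the
balance is a linear equation in `Θ` with leading coefficient `D (n_p ν_{p,q} + n_q ν_{q,p}) > 0`.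
-/

open MeasureTheory

open Real Set Module
open scoped InnerProductSpace

lemma integral_Ioi_pow_mul_exp_neg_mul_sq {b : ℝ} (hb : 0 < b) (k : ℕ) :
    ∫ y in Ioi 0, y ^ k * exp (-b * y ^ 2) = b ^ (-(k + 1) / 2 : ℝ) / 2 * Gamma ((k + 1) / 2) := by
  have hk : (-1 : ℝ) < k := by linarith [k.cast_nonneg (α := ℝ)]
  have := integral_rpow_mul_exp_neg_mul_rpow two_pos hk hb
  simp only [rpow_natCast, rpow_two] at this
  rw [this]; ring

lemma integral_Ioi_pow_add_two_mul_exp_neg_mul_sq {b : ℝ} (hb : 0 < b) (k : ℕ) :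
    ∫ y in Ioi 0, y ^ (k + 2) * exp (-b * y ^ 2)
      = (k + 1) / (2 * b) * ∫ y in Ioi 0, y ^ k * exp (-b * y ^ 2) := by
  have hΓ : Gamma ((((k + 2 : ℕ) : ℝ) + 1) / 2) = (k + 1) / 2 * Gamma ((k + 1) / 2) := by
    rw [← Gamma_add_one (by positivity)]; push_cast; ring_nf
  have hpow : b ^ (-(((k + 2 : ℕ) : ℝ) + 1) / 2) = b ^ (-(k + 1) / 2 : ℝ) * b⁻¹ := by
    rw [← rpow_neg_one, ← rpow_add hb]; push_cast; ring_nf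
  rw [integral_Ioi_pow_mul_exp_neg_mul_sq hb, integral_Ioi_pow_mul_exp_neg_mul_sq hb, hΓ, hpow]
  field_simp

section GaussianMoments

variable {V : Type*} [NormedAddCommGroup V] [InnerProductSpace ℝ V] [FiniteDimensional ℝ V]
  [MeasurableSpace V] [BorelSpace V]

lemma integral_sq_norm_mul_exp_neg_mul_sq_norm_s9 {b : ℝ} (hb : 0 < b) :
    ∫ v : V, ‖v‖ ^ 2 * exp (-b * ‖v‖ ^ 2)
      = finrank ℝ V / (2 * b) * (π / b) ^ (finrank ℝ V / 2 : ℝ) := by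
  rcases subsingleton_or_nontrivial V with hV | hV
  · simp [Subsingleton.elim _ (0 : V), finrank_zero_of_subsingleton]
  obtain ⟨k, hk⟩ := Nat.exists_eq_add_one.mpr (finrank_pos (R := ℝ) (M := V))
  rw [← GaussianFourier.integral_rexp_neg_mul_sq_norm hb,
    integral_fun_norm_addHaar volume (fun r => r ^ 2 * exp (-b * r ^ 2)),
    integral_fun_norm_addHaar volume (fun r => exp (-b * r ^ 2))]
  simp only [hk, add_tsub_cancel_right, smul_eq_mul, ← mul_assoc, ← pow_add]
  rw [integral_Ioi_pow_add_two_mul_exp_neg_mul_sq hb]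
  push_cast
  ring

lemma integrable_exp_neg_mul_sq_norm {b : ℝ} (hb : 0 < b) :
    Integrable fun v : V => exp (-b * ‖v‖ ^ 2) :=
  .of_integral_ne_zero (by rw [GaussianFourier.integral_rexp_neg_mul_sq_norm hb]; positivity)

lemma integrable_sq_norm_mul_exp_neg_mul_sq_norm {b : ℝ} (hb : 0 < b) :
    Integrable fun v : V => ‖v‖ ^ 2 * exp (-b * ‖v‖ ^ 2) := by
  rcases subsingleton_or_nontrivial V with hV | hV
  · simp [Subsingleton.elim _ (0 : V)]
  have := finrank_pos (R := ℝ) (M := V)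
  exact .of_integral_ne_zero (by rw [integral_sq_norm_mul_exp_neg_mul_sq_norm_s9 hb]; positivity)

end GaussianMoments

section SecondMoment

variable {E : Type*} [NormedAddCommGroup E] [InnerProductSpace ℝ E] [MeasurableSpace E]
  {μ : Measure E}

lemma integrable_sq_norm_add_mul [BorelSpace E] {g : E → ℝ} (hg : Integrable g μ)
    (hg₂ : Integrable (fun w => ‖w‖ ^ 2 * g w) μ) (u : E) :
    Integrable (fun w => ‖w + u‖ ^ 2 * g w) μ := by
  refine ((hg₂.norm.add (hg.norm.const_mul (‖u‖ ^ 2))).const_mul 2).mono'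
    ((by fun_prop : Continuous fun w : E => ‖w + u‖ ^ 2).aestronglyMeasurable.mul
      hg.aestronglyMeasurable) (.of_forall fun w => ?_)
  have hpar := parallelogram_law_with_norm ℝ w u
  simp only [Pi.add_apply, norm_mul, norm_pow, norm_norm]
  nlinarith [norm_nonneg (g w), sq_nonneg ‖w - u‖]

lemma integral_sq_norm_add_mul_of_even [BorelSpace E] [μ.IsNegInvariant] {g : E → ℝ}
    (hg_even : ∀ w, g (-w) = g w) (hg : Integrable g μ)
    (hg₂ : Integrable (fun w => ‖w‖ ^ 2 * g w) μ) (u : E) :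
    ∫ w, ‖w + u‖ ^ 2 * g w ∂μ = (∫ w, ‖w‖ ^ 2 * g w ∂μ) + ‖u‖ ^ 2 * ∫ w, g w ∂μ := by
  have hsymm : ∫ w, ‖w - u‖ ^ 2 * g w ∂μ = ∫ w, ‖w + u‖ ^ 2 * g w ∂μ := by
    rw [← integral_neg_eq_self (fun w => ‖w + u‖ ^ 2 * g w)]
    simp only [hg_even, neg_add_eq_sub, norm_sub_rev]
  have hsum : (∫ w, ‖w + u‖ ^ 2 * g w ∂μ) + ∫ w, ‖w - u‖ ^ 2 * g w ∂μ
      = 2 * ((∫ w, ‖w‖ ^ 2 * g w ∂μ) + ‖u‖ ^ 2 * ∫ w, g w ∂μ) := by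
    have := integrable_sq_norm_add_mul hg hg₂
    rw [← integral_add (this u) (by simpa [sub_eq_add_neg] using this (-u)),
      ← integral_const_mul, ← integral_add hg₂ (hg.const_mul _), ← integral_const_mul]
    congr 1 with w
    linear_combination g w * parallelogram_law_with_norm ℝ w u
  linarith

lemma integral_sq_norm_mul_eq_of_mean [CompleteSpace E] {f : E → ℝ} (hf : Integrable f μ)
    (hf_mom : Integrable (fun v => f v • v) μ) (hf_en : Integrable (fun v => ‖v‖ ^ 2 * f v) μ)
    {vb : E} (hvb : (∫ v, f v ∂μ) • vb = ∫ v, f v • v ∂μ) :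
    ∫ v, ‖v‖ ^ 2 * f v ∂μ = (∫ v, ‖v - vb‖ ^ 2 * f v ∂μ) + (∫ v, f v ∂μ) * ‖vb‖ ^ 2 := by
  have hcross := hf_mom.const_inner (𝕜 := ℝ) vb
  have hcentred : ∫ v, ‖v - vb‖ ^ 2 * f v ∂μ
      = (∫ v, ‖v‖ ^ 2 * f v ∂μ) - 2 * ⟪vb, (∫ v, f v • v ∂μ)⟫_ℝ + ‖vb‖ ^ 2 * ∫ v, f v ∂μ := by
    have hexpand : ∀ v, ‖v - vb‖ ^ 2 * f v
        = ‖v‖ ^ 2 * f v - 2 * ⟪vb, f v • v⟫_ℝ + ‖vb‖ ^ 2 * f v := fun v => by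
      rw [norm_sub_sq_real, inner_smul_right, real_inner_comm]; ring
    simp only [hexpand]
    rw [integral_add (by exact hf_en.sub (hcross.const_mul 2)) (hf.const_mul _),
      integral_sub hf_en (hcross.const_mul 2), integral_const_mul, integral_const_mul,
      integral_inner hf_mom]
  rw [hcentred, ← hvb, inner_smul_right, real_inner_self_eq_norm_sq]
  ring

end SecondMoment

section Maxwellian

variable {D : ℕ} {m n T : ℝ}

lemma maxwellian_eq_mul_exp (vb v : EuclideanSpace ℝ (Fin D)) :
    maxwellian D m n T vb v
      = n * (m / (2 * π * T)) ^ ((D : ℝ) / 2) * exp (-(m / (2 * T)) * ‖v - vb‖ ^ 2) := by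
  rw [maxwellian]; ring_nf

lemma sq_norm_mul_maxwellian_eq (vb v : EuclideanSpace ℝ (Fin D)) :
    ‖v‖ ^ 2 * maxwellian D m n T vb v = n * (m / (2 * π * T)) ^ ((D : ℝ) / 2)
      * (‖(v - vb) + vb‖ ^ 2 * exp (-(m / (2 * T)) * ‖v - vb‖ ^ 2)) := by
  rw [maxwellian_eq_mul_exp, sub_add_cancel]; ring

lemma integrable_sq_norm_mul_maxwellian (hm : 0 < m) (hT : 0 < T)
    (vb : EuclideanSpace ℝ (Fin D)) :
    Integrable fun v => ‖v‖ ^ 2 * maxwellian D m n T vb v := by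
  have hb : 0 < m / (2 * T) := by positivity
  simp only [sq_norm_mul_maxwellian_eq]
  exact ((integrable_sq_norm_add_mul (integrable_exp_neg_mul_sq_norm hb)
    (integrable_sq_norm_mul_exp_neg_mul_sq_norm hb) vb).comp_sub_right vb).const_mul _

lemma integral_sq_norm_mul_maxwellian (hm : 0 < m) (hT : 0 < T)
    (vb : EuclideanSpace ℝ (Fin D)) :
    ∫ v, ‖v‖ ^ 2 * maxwellian D m n T vb v = n * ‖vb‖ ^ 2 + D * n * T / m := by
  have hb : 0 < m / (2 * T) := by positivity
  have hnormalise :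
      (m / (2 * π * T)) ^ ((D : ℝ) / 2) * (π / (m / (2 * T))) ^ ((D : ℝ) / 2) = 1 := by
    rw [← mul_rpow (by positivity) (by positivity)]
    field_simp
    exact one_rpow _
  simp only [sq_norm_mul_maxwellian_eq]
  rw [integral_const_mul, integral_sub_right_eq_self
      (fun w => ‖w + vb‖ ^ 2 * exp (-(m / (2 * T)) * ‖w‖ ^ 2)) vb,
    integral_sq_norm_add_mul_of_even (fun w => by rw [norm_neg])
      (integrable_exp_neg_mul_sq_norm hb) (integrable_sq_norm_mul_exp_neg_mul_sq_norm hb),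
    integral_sq_norm_mul_exp_neg_mul_sq_norm_s9 hb, GaussianFourier.integral_rexp_neg_mul_sq_norm hb,
    finrank_euclideanSpace_fin]
  linear_combination (norm := (field_simp; ring)) (n * D * T / m + n * ‖vb‖ ^ 2) * hnormalise

end Maxwellian

lemma mul_integral_sq_norm_mul_bgk_eq {D : ℕ} {m n T Θ ν : ℝ} (hm : 0 < m) (hΘ : 0 < Θ)
    {f : EuclideanSpace ℝ (Fin D) → ℝ} (hf : Integrable f)
    (hf_mom : Integrable fun v => f v • v) (hf_en : Integrable fun v => ‖v‖ ^ 2 * f v)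
    (hn : n = ∫ v, f v) {vb : EuclideanSpace ℝ (Fin D)} (hvb : n • vb = ∫ v, f v • v)
    (hT : (D : ℝ) / 2 * n * T = ∫ v, m / 2 * ‖v - vb‖ ^ 2 * f v) (u : EuclideanSpace ℝ (Fin D)) :
    m * ∫ v, ‖v‖ ^ 2 * (ν * (maxwellian D m n Θ u v - f v))
      = ν * (D * n * (Θ - T) + m * n * (‖u‖ ^ 2 - ‖vb‖ ^ 2)) := by
  have hf_centred : ∫ v, ‖v - vb‖ ^ 2 * f v = D * n * T / m := by
    simp only [mul_assoc (m / 2), integral_const_mul] at hT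
    field_simp
    linarith
  have hf_sq : ∫ v, ‖v‖ ^ 2 * f v = D * n * T / m + n * ‖vb‖ ^ 2 := by
    rw [integral_sq_norm_mul_eq_of_mean hf hf_mom hf_en (hn ▸ hvb), hf_centred, ← hn]
  have hsplit : ∀ v, ‖v‖ ^ 2 * (ν * (maxwellian D m n Θ u v - f v))
      = ν * (‖v‖ ^ 2 * maxwellian D m n Θ u v) - ν * (‖v‖ ^ 2 * f v) := fun v => by ring
  simp only [hsplit]
  rw [integral_sub ((integrable_sq_norm_mul_maxwellian hm hΘ u).const_mul ν) (hf_en.const_mul ν),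
    integral_const_mul, integral_const_mul, integral_sq_norm_mul_maxwellian hm hΘ, hf_sq]
  field_simp
  ring

theorem bgk_mixture_temperature_general
    (D : ℕ) (hD : 1 ≤ D) (mp mq : ℝ) (hmp : 0 < mp) (hmq : 0 < mq)
    (fp fq : EuclideanSpace ℝ (Fin D) → ℝ)
    (hfp_int : Integrable fp) (hfq_int : Integrable fq)
    (hfp_mom : Integrable (fun v => fp v • v))
    (hfq_mom : Integrable (fun v => fq v • v))
    (hfp_en : Integrable (fun v => ‖v‖ ^ 2 * fp v))
    (hfq_en : Integrable (fun v => ‖v‖ ^ 2 * fq v))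
    (np nq : ℝ) (hnp_def : np = ∫ v, fp v) (hnq_def : nq = ∫ v, fq v)
    (hnp : 0 < np) (hnq : 0 < nq)
    (vbp vbq : EuclideanSpace ℝ (Fin D))
    (hvbp : np • vbp = ∫ v, fp v • v) (hvbq : nq • vbq = ∫ v, fq v • v)
    (Tp Tq : ℝ)
    (hTp_def : (D : ℝ) / 2 * np * Tp = ∫ v, mp / 2 * ‖v - vbp‖ ^ 2 * fp v)
    (hTq_def : (D : ℝ) / 2 * nq * Tq = ∫ v, mq / 2 * ‖v - vbq‖ ^ 2 * fq v)
    (ρp ρq : ℝ) (hρp : ρp = mp * np) (hρq : ρq = mq * nq)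
    (νpq νqp : ℝ) (hνpq : 0 < νpq) (hνqp : 0 < νqp)
    (u : EuclideanSpace ℝ (Fin D))
    (Θ : ℝ) (hΘ : 0 < Θ) :
    mp * (∫ v, ‖v‖ ^ 2 * (νpq * (maxwellian D mp np Θ u v - fp v)))
      + mq * (∫ v, ‖v‖ ^ 2 * (νqp * (maxwellian D mq nq Θ u v - fq v))) = 0 ↔
    Θ = (np * νpq * Tp + nq * νqp * Tq) / (np * νpq + nq * νqp)
      + (ρp * νpq * (‖vbp‖ ^ 2 - ‖u‖ ^ 2) + ρq * νqp * (‖vbq‖ ^ 2 - ‖u‖ ^ 2))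
        / ((D : ℝ) * (np * νpq + nq * νqp)) := by
  have hDS : (D : ℝ) * (np * νpq + nq * νqp) ≠ 0 := by
    have : (0 : ℝ) < D := by exact_mod_cast hD
    positivity
  rw [mul_integral_sq_norm_mul_bgk_eq hmp hΘ hfp_int hfp_mom hfp_en hnp_def hvbp hTp_def,
    mul_integral_sq_norm_mul_bgk_eq hmq hΘ hfq_int hfq_mom hfq_en hnq_def hvbq hTq_def, hρp, hρq]
  constructor <;> intro h
  · field_simp
    linear_combination h
  · field_simp at h
    linear_combination h

/-- The interspecies kinetic-energy exchange of the multispecies BGK operator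
balances if and only if the common mixture temperature `Θ` equals
`(n_p ν_{p,q} T_p + n_q ν_{q,p} T_q)/(n_p ν_{p,q} + n_q ν_{q,p})
 + (ρ_p ν_{p,q}(|v̄_p|² − |u|²) + ρ_q ν_{q,p}(|v̄_q|² − |u|²))/(D(n_p ν_{p,q} + n_q ν_{q,p}))`. -/
theorem bgk_mixture_temperature
    (D : ℕ) (hD : 1 ≤ D) (mp mq : ℝ) (hmp : 0 < mp) (hmq : 0 < mq)
    (fp fq : EuclideanSpace ℝ (Fin D) → ℝ)
    (hfp_nonneg : ∀ v, 0 ≤ fp v) (hfq_nonneg : ∀ v, 0 ≤ fq v)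
    (hfp_int : Integrable fp) (hfq_int : Integrable fq)
    (hfp_mom : Integrable (fun v => fp v • v))
    (hfq_mom : Integrable (fun v => fq v • v))
    (hfp_en : Integrable (fun v => ‖v‖ ^ 2 * fp v))
    (hfq_en : Integrable (fun v => ‖v‖ ^ 2 * fq v))
    (np nq : ℝ) (hnp_def : np = ∫ v, fp v) (hnq_def : nq = ∫ v, fq v)
    (hnp : 0 < np) (hnq : 0 < nq)
    (vbp vbq : EuclideanSpace ℝ (Fin D))
    (hvbp : np • vbp = ∫ v, fp v • v) (hvbq : nq • vbq = ∫ v, fq v • v)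
    (Tp Tq : ℝ)
    (hTp_def : (D : ℝ) / 2 * np * Tp = ∫ v, mp / 2 * ‖v - vbp‖ ^ 2 * fp v)
    (hTq_def : (D : ℝ) / 2 * nq * Tq = ∫ v, mq / 2 * ‖v - vbq‖ ^ 2 * fq v)
    (ρp ρq : ℝ) (hρp : ρp = mp * np) (hρq : ρq = mq * nq)
    (νpq νqp : ℝ) (hνpq : 0 < νpq) (hνqp : 0 < νqp)
    (u : EuclideanSpace ℝ (Fin D))
    (hu : u = (ρp * νpq + ρq * νqp)⁻¹ • ((ρp * νpq) • vbp + (ρq * νqp) • vbq))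
    (Θ : ℝ) (hΘ : 0 < Θ) :
    mp * (∫ v, ‖v‖ ^ 2 * (νpq * (maxwellian D mp np Θ u v - fp v)))
      + mq * (∫ v, ‖v‖ ^ 2 * (νqp * (maxwellian D mq nq Θ u v - fq v))) = 0 ↔
    Θ = (np * νpq * Tp + nq * νqp * Tq) / (np * νpq + nq * νqp)
      + (ρp * νpq * (‖vbp‖ ^ 2 - ‖u‖ ^ 2) + ρq * νqp * (‖vbq‖ ^ 2 - ‖u‖ ^ 2))
        / ((D : ℝ) * (np * νpq + nq * νqp)) :=
  bgk_mixture_temperature_general D hD mp mq hmp hmq fp fq hfp_int hfq_int hfp_mom hfq_mom hfp_en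
    hfq_en np nq hnp_def hnq_def hnp hnq vbp vbq hvbp hvbq Tp Tq hTp_def hTq_def ρp ρq hρp hρq νpq
    νqp hνpq hνqp u Θ hΘ
end

section
/- Let D ≥ 1, let m_p, m_q > 0, n_p, n_q > 0, ν_{p,q}, ν_{q,p} > 0, T_p ≥ 0, T_q ≥ 0 and v̄_p, v̄_q ∈ ℝ^D, and set ρ_p = m_p n_p, ρ_q = m_q n_q. Define the mixture velocity u = (ρ_p ν_{p,q} v̄_p + ρ_q ν_{q,p} v̄_q)/(ρ_p ν_{p,q} + ρ_q ν_{q,p}) and the mixture temperature T_{p,q} = (n_p ν_{p,q} T_p + n_q ν_{q,p} T_q)/(n_p ν_{p,q} + n_q ν_{q,p}) + (ρ_p ν_{p,q}(|v̄_p|² − |u|²) + ρ_q ν_{q,p}(|v̄_q|² − |u|²)) / (D (n_p ν_{p,q} + n_q ν_{q,p})). Then T_{p,q} ≥ 0. -/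
lemma convexOn_norm_sq {E : Type*} [SeminormedAddCommGroup E] [NormedSpace ℝ E] :
    ConvexOn ℝ Set.univ fun x : E => ‖x‖ ^ 2 :=
  (convexOn_norm convex_univ).pow (fun x _ => norm_nonneg x) 2

lemma add_mul_norm_sq_weightedAverage_le {E : Type*} [SeminormedAddCommGroup E]
    [NormedSpace ℝ E] {a b : ℝ} (ha : 0 ≤ a) (hb : 0 ≤ b) (x y : E) :
    (a + b) * ‖(a + b)⁻¹ • (a • x + b • y)‖ ^ 2 ≤ a * ‖x‖ ^ 2 + b * ‖y‖ ^ 2 := by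
  rcases (add_nonneg ha hb).eq_or_lt with hab | hab
  · rw [← hab, zero_mul]
    positivity
  have hjensen := convexOn_norm_sq.2 (Set.mem_univ x) (Set.mem_univ y)
    (div_nonneg ha hab.le) (div_nonneg hb hab.le) (by field_simp)
  simp only [smul_eq_mul, div_eq_inv_mul, mul_smul, ← smul_add] at hjensen
  calc (a + b) * ‖(a + b)⁻¹ • (a • x + b • y)‖ ^ 2
      ≤ (a + b) * ((a + b)⁻¹ * (a * ‖x‖ ^ 2) + (a + b)⁻¹ * (b * ‖y‖ ^ 2)) := by
        gcongr
        simpa only [mul_assoc] using hjensen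
    _ = a * ‖x‖ ^ 2 + b * ‖y‖ ^ 2 := by field_simp

theorem bgk_mixture_temperature_nonneg_general
    (D : ℕ) (mp mq np nq νpq νqp Tp Tq : ℝ)
    (hmp : 0 < mp) (hmq : 0 < mq) (hnp : 0 < np) (hnq : 0 < nq)
    (hνpq : 0 < νpq) (hνqp : 0 < νqp) (hTp : 0 ≤ Tp) (hTq : 0 ≤ Tq)
    (vbp vbq : EuclideanSpace ℝ (Fin D))
    (ρp ρq : ℝ) (hρp : ρp = mp * np) (hρq : ρq = mq * nq)
    (u : EuclideanSpace ℝ (Fin D))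
    (hu : u = (ρp * νpq + ρq * νqp)⁻¹ • ((ρp * νpq) • vbp + (ρq * νqp) • vbq))
    (Tpq : ℝ)
    (hTpq : Tpq = (np * νpq * Tp + nq * νqp * Tq) / (np * νpq + nq * νqp)
      + (ρp * νpq * (‖vbp‖ ^ 2 - ‖u‖ ^ 2) + ρq * νqp * (‖vbq‖ ^ 2 - ‖u‖ ^ 2))
        / ((D : ℝ) * (np * νpq + nq * νqp))) :
    0 ≤ Tpq := by
  have hap : 0 ≤ ρp * νpq := by rw [hρp]; positivity
  have haq : 0 ≤ ρq * νqp := by rw [hρq]; positivity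
  have hkinetic : 0 ≤ ρp * νpq * (‖vbp‖ ^ 2 - ‖u‖ ^ 2) + ρq * νqp * (‖vbq‖ ^ 2 - ‖u‖ ^ 2) := by
    have := add_mul_norm_sq_weightedAverage_le hap haq vbp vbq
    rw [← hu] at this
    linarith
  rw [hTpq]
  exact add_nonneg (by positivity) (div_nonneg hkinetic (by positivity))

/-- Nonnegativity of the mixture temperature `T_{p,q}` in the multispecies BGK
model. -/
theorem bgk_mixture_temperature_nonneg
    (D : ℕ) (hD : 1 ≤ D) (mp mq np nq νpq νqp Tp Tq : ℝ)
    (hmp : 0 < mp) (hmq : 0 < mq) (hnp : 0 < np) (hnq : 0 < nq)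
    (hνpq : 0 < νpq) (hνqp : 0 < νqp) (hTp : 0 ≤ Tp) (hTq : 0 ≤ Tq)
    (vbp vbq : EuclideanSpace ℝ (Fin D))
    (ρp ρq : ℝ) (hρp : ρp = mp * np) (hρq : ρq = mq * nq)
    (u : EuclideanSpace ℝ (Fin D))
    (hu : u = (ρp * νpq + ρq * νqp)⁻¹ • ((ρp * νpq) • vbp + (ρq * νqp) • vbq))
    (Tpq : ℝ)
    (hTpq : Tpq = (np * νpq * Tp + nq * νqp * Tq) / (np * νpq + nq * νqp)
      + (ρp * νpq * (‖vbp‖ ^ 2 - ‖u‖ ^ 2) + ρq * νqp * (‖vbq‖ ^ 2 - ‖u‖ ^ 2))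
        / ((D : ℝ) * (np * νpq + nq * νqp))) :
    0 ≤ Tpq :=
  bgk_mixture_temperature_nonneg_general D mp mq np nq νpq νqp Tp Tq hmp hmq hnp hnq hνpq hνqp hTp
    hTq vbp vbq ρp ρq hρp hρq u hu Tpq hTpq
end

section
/- Let M ≥ 0 be real, let K be a natural number, and let τ ∈ ℂ satisfy |(M+1)τ − M| ≤ 1 (equivalently, τ lies in the closed disk of centre M/(M+1) and radius 1/(M+1)). Then |τ| ≤ 1 and the projective forward Euler amplification factor satisfies |τ^K((M+1)τ − M)| ≤ 1. In particular, writing τ = 1 + z, every z in the closed disk of centre −1/(M+1) and radius 1/(M+1) lies in the stability region of projective forward Euler. -/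
/-! The disk `‖(M+1)τ − M‖ ≤ 1` has centre `M/(M+1)` and radius `1/(M+1)`, so it touches the
unit circle from inside at `τ = 1`; hence `‖τ‖ ≤ 1` there, and `σ(τ) = τ^K((M+1)τ − M)` is a
product of factors of norm at most one. The `z`-disk is the same disk translated by `−1`. -/

section

variable {𝕜 : Type*} [RCLike 𝕜] {M : ℝ}

theorem norm_ofReal_add_one (hM : 0 < M + 1) : ‖(M : 𝕜) + 1‖ = M + 1 := by
  rw [← RCLike.ofReal_one, ← RCLike.ofReal_add, RCLike.norm_ofReal, abs_of_pos hM]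

theorem norm_le_one_of_norm_add_one_mul_sub_le_one (hM : 0 ≤ M) {τ : 𝕜}
    (h : ‖((M : 𝕜) + 1) * τ - M‖ ≤ 1) : ‖τ‖ ≤ 1 := by
  have hnorm : (M + 1) * ‖τ‖ ≤ 1 + M :=
    calc (M + 1) * ‖τ‖ = ‖((M : 𝕜) + 1) * τ - M + M‖ := by
          rw [sub_add_cancel, norm_mul, norm_ofReal_add_one (by linarith)]
      _ ≤ ‖((M : 𝕜) + 1) * τ - M‖ + ‖(M : 𝕜)‖ := norm_add_le _ _
      _ ≤ 1 + M := by rw [RCLike.norm_ofReal, abs_of_nonneg hM]; linarith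
  nlinarith [norm_nonneg τ]

theorem norm_add_one_mul_one_add_sub_le_one (hM : 0 < M + 1) {z : 𝕜}
    (hz : ‖z - (-(1 / ((M : 𝕜) + 1)))‖ ≤ 1 / (M + 1)) :
    ‖((M : 𝕜) + 1) * (1 + z) - M‖ ≤ 1 := by
  have hne : (M : 𝕜) + 1 ≠ 0 := by
    rw [← norm_ne_zero_iff, norm_ofReal_add_one hM]; exact hM.ne'
  have hshift : ((M : 𝕜) + 1) * (1 + z) - M = ((M : 𝕜) + 1) * (z - (-(1 / ((M : 𝕜) + 1)))) := by
    field_simp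
    ring
  calc ‖((M : 𝕜) + 1) * (1 + z) - M‖ = (M + 1) * ‖z - (-(1 / ((M : 𝕜) + 1)))‖ := by
        rw [hshift, norm_mul, norm_ofReal_add_one hM]
    _ ≤ (M + 1) * (1 / (M + 1)) := mul_le_mul_of_nonneg_left hz hM.le
    _ = 1 := mul_one_div_cancel hM.ne'

end

theorem norm_pow_mul_le_one {α : Type*} [NormedDivisionRing α] {τ w : α} (hτ : ‖τ‖ ≤ 1)
    (hw : ‖w‖ ≤ 1) (K : ℕ) : ‖τ ^ K * w‖ ≤ 1 := by
  rw [norm_mul, norm_pow]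
  exact mul_le_one₀ (pow_le_one₀ (norm_nonneg τ) hτ) (norm_nonneg w) hw

/-- Stability of projective forward Euler: if the inner amplification factor `τ`
lies in the closed disk of centre `M/(M+1)` and radius `1/(M+1)` (i.e.
`|(M+1)τ − M| ≤ 1`), then `|τ| ≤ 1` and the amplification factor satisfies
`|τ^K((M+1)τ − M)| ≤ 1`; in particular, writing `τ = 1 + z`, every `z` in the
closed disk of centre `−1/(M+1)` and radius `1/(M+1)` lies in the stability
region of projective forward Euler. -/
theorem projective_forward_euler_stability
    (M : ℝ) (hM : 0 ≤ M) (K : ℕ) :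
    (∀ τ : ℂ, ‖((M : ℂ) + 1) * τ - (M : ℂ)‖ ≤ 1 →
      ‖τ‖ ≤ 1 ∧
      ‖τ ^ K * (((M : ℂ) + 1) * τ - (M : ℂ))‖ ≤ 1) ∧
    (∀ z : ℂ, ‖z - (-(1 / ((M : ℂ) + 1)))‖ ≤ 1 / (M + 1) →
      ‖(1 + z) ^ K * (((M : ℂ) + 1) * (1 + z) - (M : ℂ))‖ ≤ 1) := by
  have inner_disk : ∀ τ : ℂ, ‖((M : ℂ) + 1) * τ - (M : ℂ)‖ ≤ 1 →
      ‖τ‖ ≤ 1 ∧ ‖τ ^ K * (((M : ℂ) + 1) * τ - (M : ℂ))‖ ≤ 1 := fun τ h =>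
    have hτ := norm_le_one_of_norm_add_one_mul_sub_le_one hM h
    ⟨hτ, norm_pow_mul_le_one hτ h K⟩
  refine ⟨inner_disk, fun z hz => (inner_disk (1 + z) ?_).2⟩
  exact norm_add_one_mul_one_add_sub_le_one (by linarith) hz
end

section
/- Let τ ∈ ℂ, let K₀, K₁ be natural numbers and M₀, M₁ ≥ 0 real numbers. Consider the two-level telescopic projective forward Euler method whose inner (level-0) integrator is multiplication by τ, whose level-1 integrator is projective forward Euler with K₀+1 inner steps and extrapolation ratio M₀, and whose level-2 (outer) integrator is projective forward Euler with K₁+1 level-1 steps and extrapolation ratio M₁. Then one outer step is multiplication by the composite amplification factor σ₂(τ) = σ₁(τ)^{K₁} · ((M₁+1)σ₁(τ) − M₁), where σ₁(τ) = τ^{K₀}((M₀+1)τ − M₀). Moreover, if |(M₁+1)σ₁(τ) − M₁| ≤ 1 then |σ₂(τ)| ≤ 1. -/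
/-!
On a linear problem every integrator is multiplication by its amplification factor. If the
inner integrator multiplies by `c`, then `K + 1` inner steps followed by extrapolation with
ratio `M` multiply by `c ^ (K + 1) + M (c ^ (K + 1) - c ^ K) = c ^ K ((M + 1) c - M)`; applying
this once with `c = τ` and once with `c = σ₁` gives `σ₂`. For stability, `M ≥ 0` and the
triangle inequality turn `‖(M + 1) σ - M‖ ≤ 1` into `(M + 1) ‖σ‖ ≤ M + 1`, so `‖σ‖ ≤ 1`.
-/

theorem projective_amplification {R : Type*} [CommRing R] (c M : R) (K : ℕ) (w : R) :
    c ^ (K + 1) * w + M * (c ^ (K + 1) * w - c ^ K * w) = c ^ K * ((M + 1) * c - M) * w := by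
  ring

theorem norm_le_one_of_norm_extrapolation_le_one {M : ℝ} (hM : 0 ≤ M) {σ : ℂ}
    (h : ‖((M : ℂ) + 1) * σ - M‖ ≤ 1) : ‖σ‖ ≤ 1 := by
  have hcast : ((M : ℂ) + 1) = ((M + 1 : ℝ) : ℂ) := by push_cast; rfl
  have hnorm : ‖((M : ℂ) + 1) * σ‖ = (M + 1) * ‖σ‖ := by
    rw [norm_mul, hcast, Complex.norm_of_nonneg (by linarith)]
  have htri := norm_sub_norm_le (((M : ℂ) + 1) * σ) M
  rw [hnorm, Complex.norm_of_nonneg hM] at htri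
  nlinarith

theorem norm_projective_amplification_le_one {M : ℝ} (hM : 0 ≤ M) {σ : ℂ} (K : ℕ)
    (h : ‖((M : ℂ) + 1) * σ - M‖ ≤ 1) : ‖σ ^ K * (((M : ℂ) + 1) * σ - M)‖ ≤ 1 := by
  rw [norm_mul, norm_pow]
  exact mul_le_one₀ (pow_le_one₀ (norm_nonneg σ) (norm_le_one_of_norm_extrapolation_le_one hM h))
    (norm_nonneg _) h

theorem telescopic_projective_forward_euler_general
    (τ : ℂ) (K₀ K₁ : ℕ) (M₀ M₁ : ℝ) (hM₁ : 0 ≤ M₁)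
    (P₁ : ℂ → ℂ)
    (hP₁ : ∀ w, P₁ w = τ ^ (K₀ + 1) * w
      + (M₀ : ℂ) * (τ ^ (K₀ + 1) * w - τ ^ K₀ * w))
    (P₂ : ℂ → ℂ)
    (hP₂ : ∀ w, P₂ w = P₁^[K₁ + 1] w
      + (M₁ : ℂ) * (P₁^[K₁ + 1] w - P₁^[K₁] w))
    (σ₁ σ₂ : ℂ)
    (hσ₁ : σ₁ = τ ^ K₀ * (((M₀ : ℂ) + 1) * τ - (M₀ : ℂ)))
    (hσ₂ : σ₂ = σ₁ ^ K₁ * (((M₁ : ℂ) + 1) * σ₁ - (M₁ : ℂ))) :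
    (∀ w, P₂ w = σ₂ * w) ∧
    (‖((M₁ : ℂ) + 1) * σ₁ - (M₁ : ℂ)‖ ≤ 1 → ‖σ₂‖ ≤ 1) := by
  have hP₁_eq : P₁ = (σ₁ * ·) := funext fun w => by
    rw [hP₁, projective_amplification, hσ₁]
  refine ⟨fun w => ?_, fun h => hσ₂ ▸ norm_projective_amplification_le_one hM₁ K₁ h⟩
  rw [hP₂, hP₁_eq, mul_left_iterate_apply, mul_left_iterate_apply, projective_amplification, hσ₂]

/-- Two-level telescopic projective forward Euler: if the innermost integrator is
multiplication by `τ`, the level-1 integrator is projective forward Euler with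
`K₀+1` inner steps and extrapolation ratio `M₀`, and the outer integrator is
projective forward Euler with `K₁+1` level-1 steps and extrapolation ratio `M₁`,
then one outer step is multiplication by the composite amplification factor
`σ₂(τ) = σ₁(τ)^{K₁}((M₁+1)σ₁(τ) − M₁)` with `σ₁(τ) = τ^{K₀}((M₀+1)τ − M₀)`;
moreover `|(M₁+1)σ₁(τ) − M₁| ≤ 1` implies `|σ₂(τ)| ≤ 1`. -/
theorem telescopic_projective_forward_euler
    (τ : ℂ) (K₀ K₁ : ℕ) (M₀ M₁ : ℝ) (hM₀ : 0 ≤ M₀) (hM₁ : 0 ≤ M₁)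
    (P₁ : ℂ → ℂ)
    (hP₁ : ∀ w, P₁ w = τ ^ (K₀ + 1) * w
      + (M₀ : ℂ) * (τ ^ (K₀ + 1) * w - τ ^ K₀ * w))
    (P₂ : ℂ → ℂ)
    (hP₂ : ∀ w, P₂ w = P₁^[K₁ + 1] w
      + (M₁ : ℂ) * (P₁^[K₁ + 1] w - P₁^[K₁] w))
    (σ₁ σ₂ : ℂ)
    (hσ₁ : σ₁ = τ ^ K₀ * (((M₀ : ℂ) + 1) * τ - (M₀ : ℂ)))
    (hσ₂ : σ₂ = σ₁ ^ K₁ * (((M₁ : ℂ) + 1) * σ₁ - (M₁ : ℂ))) :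
    (∀ w, P₂ w = σ₂ * w) ∧
    (‖((M₁ : ℂ) + 1) * σ₁ - (M₁ : ℂ)‖ ≤ 1 → ‖σ₂‖ ≤ 1) :=
  telescopic_projective_forward_euler_general τ K₀ K₁ M₀ M₁ hM₁ P₁ hP₁ P₂ hP₂ σ₁ σ₂ hσ₁ hσ₂
end
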